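/- Let ℓ : ℝ^m × ℝ^m → ℝ be differentiable and convex in its first argument, F(W,V) = (1/n)·Σ_{i=1}^n ℓ(W(x_i + V f(x_i)); y_i) for W ∈ ℝ^{m×d}, V ∈ ℝ^{d×k}, and F_lin(U) = (1/n)·Σ_{i=1}^n ℓ(U x_i; y_i). Fix W, V and U of matching dimensions with WWᵀ invertible, and define the matrix G = ( W − U ; Wᵀ(WWᵀ)⁻¹ U V ), i.e. the concatenation of the m×d matrix W − U and the d×k matrix Wᵀ(WWᵀ)⁻¹UV. Then ⟨vec(G), ∇F(W,V)⟩ ≥ F(W,V) − F_lin(U), where ∇F(W,V) is the gradient of F with respect to (vec(W), vec(V)). -/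

import Mathlib

open scoped RealInnerProductSpace
open Finset Matrix

noncomputable section

/-- Euclidean column vectors in `ℝ^d`. -/
abbrev Vec (d : ℕ) : Type := EuclideanSpace ℝ (Fin d)

/-- The concatenated parameter vector `(vec(W), vec(V))`. -/
abbrev ParamM (m d k : ℕ) : Type := EuclideanSpace ℝ ((Fin m × Fin d) ⊕ (Fin d × Fin k))

/-- Pack `(W, V)` into a single Euclidean vector. -/
def pairWVm {m d k : ℕ} (W : Matrix (Fin m) (Fin d) ℝ) (V : Matrix (Fin d) (Fin k) ℝ) :
    ParamM m d k :=
  (EuclideanSpace.equiv ((Fin m × Fin d) ⊕ (Fin d × Fin k)) ℝ).symm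
    (Sum.elim (fun p => W p.1 p.2) (fun p => V p.1 p.2))

/-- The vector-output residual-network objective
`F(W,V) = (1/n)·Σᵢ ℓ(W(xᵢ + V f(xᵢ)); yᵢ)`. -/
def netObjVec {m d k n : ℕ} (ℓ : Vec m → Vec m → ℝ) (f : Vec d → Vec k)
    (x : Fin n → Vec d) (y : Fin n → Vec m) (z : ParamM m d k) : ℝ :=
  (1 / (n : ℝ)) *
    ∑ i, ℓ ((EuclideanSpace.equiv (Fin m) ℝ).symm fun a =>
        ∑ j, z (Sum.inl (a, j)) * ((x i) j + ∑ l, z (Sum.inr (j, l)) * (f (x i)) l)) (y i)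

/-- The linear-predictor objective `F_lin(U) = (1/n)·Σᵢ ℓ(U xᵢ; yᵢ)`. -/
def linObjVec {m d n : ℕ} (ℓ : Vec m → Vec m → ℝ) (x : Fin n → Vec d) (y : Fin n → Vec m)
    (U : Matrix (Fin m) (Fin d) ℝ) : ℝ :=
  (1 / (n : ℝ)) *
    ∑ i, ℓ ((EuclideanSpace.equiv (Fin m) ℝ).symm (U.mulVec fun j => (x i) j)) (y i)


/-!
The output `φᵢ(W, V) = W (xᵢ + V f(xᵢ))` is bilinear in `(W, V)`, so its derivative in the
direction `G = (W - U, M)`, `M = Wᵀ(WWᵀ)⁻¹UV`, is `(W - U)(xᵢ + V f(xᵢ)) + W M f(xᵢ)`. Since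
`W M = U V`, this is `φᵢ(W, V) - U xᵢ`, the gap between the network's prediction and the linear
one. Hence `⟨vec G, ∇F⟩ = (1/n) Σᵢ Dℓ(φᵢ)(φᵢ - U xᵢ)`, and the first-order
characterisation of convexity bounds each term below by `ℓ(φᵢ) - ℓ(U xᵢ)`.
-/

theorem ConvexOn.sub_le_apply_sub_of_hasFDerivAt {E : Type*} [NormedAddCommGroup E]
    [NormedSpace ℝ E] {s : Set E} {g : E → ℝ} {g' : E →L[ℝ] ℝ} {p q : E}
    (hg : ConvexOn ℝ s g) (hp : p ∈ s) (hq : q ∈ s) (hg' : HasFDerivAt g g' p) :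
    g p - g q ≤ g' (p - q) := by
  let γ : ℝ →ᵃ[ℝ] E := AffineMap.lineMap q p
  have hγ : HasDerivAt (g ∘ γ) (g' (p - q)) 1 :=
    HasFDerivAt.comp_hasDerivAt (1 : ℝ) (by simpa [γ] using hg') AffineMap.hasDerivAt_lineMap
  have hslope := (hg.comp_affineMap γ).slope_le_of_hasDerivAt (x := 0) (y := 1)
    (by simpa [γ] using hq) (by simpa [γ] using hp) one_pos hγ
  simpa [γ, slope_def_field] using hslope

theorem hasDerivAt_add_smul_add_sq_smul {F : Type*} [NormedAddCommGroup F] [NormedSpace ℝ F]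
    (a b c : F) : HasDerivAt (fun t : ℝ => a + t • b + t ^ 2 • c) b 0 := by
  simpa using (((hasDerivAt_id (0 : ℝ)).smul_const b).const_add a).fun_add
    ((hasDerivAt_pow 2 (0 : ℝ)).smul_const c)

theorem sum_sub_le_inner_gradient_of_convexOn {ι E F : Type*} [Fintype ι]
    [NormedAddCommGroup E] [InnerProductSpace ℝ E] [CompleteSpace E]
    [NormedAddCommGroup F] [NormedSpace ℝ F]
    {g : ι → F → ℝ} {φ : ι → E → F} {q : ι → F} {z G : E} {c : ℝ} (hc : 0 ≤ c)
    (hg : ∀ i, ConvexOn ℝ Set.univ (g i)) (hgd : ∀ i, DifferentiableAt ℝ (g i) (φ i z))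
    (hφ : ∀ i, DifferentiableAt ℝ (φ i) z) (hφG : ∀ i, HasLineDerivAt ℝ (φ i) (φ i z - q i) z G) :
    c * ∑ i, (g i (φ i z) - g i (q i)) ≤ ⟪G, gradient (fun w => c * ∑ i, g i (φ i w)) z⟫ := by
  have hline : HasLineDerivAt ℝ (fun w => c * ∑ i, g i (φ i w))
      (c * ∑ i, fderiv ℝ (g i) (φ i z) (φ i z - q i)) z G :=
    (HasDerivAt.fun_sum fun i _ => HasFDerivAt.comp_hasDerivAt (0 : ℝ)
      (by simpa using (hgd i).hasFDerivAt) (hφG i)).const_mul c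
  have hdiff : DifferentiableAt ℝ (fun w => c * ∑ i, g i (φ i w)) z := by
    have hcomp := fun i => (hgd i).comp z (hφ i)
    fun_prop
  rw [inner_gradient_right, conj_trivial, ← hdiff.lineDeriv_eq_fderiv, hline.lineDeriv]
  gcongr with i
  exact (hg i).sub_le_apply_sub_of_hasFDerivAt trivial trivial (hgd i).hasFDerivAt

def residualOutput {m d k : ℕ} (c : Vec d) (e : Vec k) (z : ParamM m d k) : Vec m :=
  (EuclideanSpace.equiv (Fin m) ℝ).symm fun a =>
    ∑ j, z (Sum.inl (a, j)) * (c j + ∑ l, z (Sum.inr (j, l)) * e l)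

section ResidualOutput

variable {m d k : ℕ}

theorem pairWVm_add_smul (W A : Matrix (Fin m) (Fin d) ℝ) (V B : Matrix (Fin d) (Fin k) ℝ)
    (t : ℝ) : pairWVm W V + t • pairWVm A B = pairWVm (W + t • A) (V + t • B) := by
  ext (⟨a, j⟩ | ⟨j, l⟩) <;> simp [pairWVm]

theorem residualOutput_pairWVm (c : Vec d) (e : Vec k) (W : Matrix (Fin m) (Fin d) ℝ)
    (V : Matrix (Fin d) (Fin k) ℝ) :
    residualOutput c e (pairWVm W V) = WithLp.toLp 2 (W *ᵥ (c.ofLp + V *ᵥ e.ofLp)) := by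
  ext a
  simp [residualOutput, pairWVm, mulVec, dotProduct]

theorem differentiable_residualOutput (c : Vec d) (e : Vec k) :
    Differentiable ℝ (residualOutput (m := m) c e) := by
  unfold residualOutput
  fun_prop

theorem hasLineDerivAt_residualOutput (c : Vec d) (e : Vec k)
    (W A : Matrix (Fin m) (Fin d) ℝ) (V B : Matrix (Fin d) (Fin k) ℝ) :
    HasLineDerivAt ℝ (residualOutput c e)
      (WithLp.toLp 2 (A *ᵥ (c.ofLp + V *ᵥ e.ofLp) + W *ᵥ (B *ᵥ e.ofLp)))
      (pairWVm W V) (pairWVm A B) := by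
  have hquadratic : ∀ t : ℝ, residualOutput c e (pairWVm W V + t • pairWVm A B) =
      residualOutput c e (pairWVm W V)
        + t • WithLp.toLp 2 (A *ᵥ (c.ofLp + V *ᵥ e.ofLp) + W *ᵥ (B *ᵥ e.ofLp))
        + t ^ 2 • WithLp.toLp 2 (A *ᵥ (B *ᵥ e.ofLp)) := by
    intro t
    rw [pairWVm_add_smul, residualOutput_pairWVm, residualOutput_pairWVm, ← WithLp.toLp_smul,
      ← WithLp.toLp_smul, ← WithLp.toLp_add, ← WithLp.toLp_add]
    congr 1
    simp only [add_mulVec, mulVec_add, smul_mulVec, mulVec_smul]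
    module
  unfold HasLineDerivAt
  simp_rw [hquadratic]
  exact hasDerivAt_add_smul_add_sq_smul _ _ _

theorem hasLineDerivAt_residualOutput_sub (c : Vec d) (e : Vec k)
    {W U : Matrix (Fin m) (Fin d) ℝ} {V M : Matrix (Fin d) (Fin k) ℝ} (hWM : W * M = U * V) :
    HasLineDerivAt ℝ (residualOutput c e)
      (residualOutput c e (pairWVm W V) - WithLp.toLp 2 (U *ᵥ c.ofLp))
      (pairWVm W V) (pairWVm (W - U) M) := by
  convert hasLineDerivAt_residualOutput c e W (W - U) V M using 1
  rw [residualOutput_pairWVm, ← WithLp.toLp_sub, mulVec_mulVec, hWM, ← mulVec_mulVec]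
  congr 1
  simp only [sub_mulVec, mulVec_add]
  abel

end ResidualOutput

/-- Lemma 3 of the paper: `⟨vec(G), ∇F(W,V)⟩ ≥ F(W,V) − F_lin(U)` where
`G = (W − U ; Wᵀ(WWᵀ)⁻¹UV)`. -/
theorem inner_vecG_gradient_ge_vec
    {m d k n : ℕ} (ℓ : Vec m → Vec m → ℝ) (f : Vec d → Vec k)
    (x : Fin n → Vec d) (y : Fin n → Vec m)
    (hconv : ∀ y₀ : Vec m, ConvexOn ℝ Set.univ fun p => ℓ p y₀)
    (hdiff : ∀ y₀ : Vec m, Differentiable ℝ fun p => ℓ p y₀)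
    (W U : Matrix (Fin m) (Fin d) ℝ) (V : Matrix (Fin d) (Fin k) ℝ)
    (hinv : IsUnit (W * Wᵀ).det) :
    ⟪pairWVm (W - U) (Wᵀ * (W * Wᵀ)⁻¹ * U * V), gradient (netObjVec ℓ f x y) (pairWVm W V)⟫ ≥
      netObjVec ℓ f x y (pairWVm W V) - linObjVec ℓ x y U := by
  have hWM : W * (Wᵀ * (W * Wᵀ)⁻¹ * U * V) = U * V := by
    simp only [← Matrix.mul_assoc, Matrix.mul_nonsing_inv _ hinv, Matrix.one_mul]
  have key := sum_sub_le_inner_gradient_of_convexOn (g := fun i p => ℓ p (y i))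
    (q := fun i => WithLp.toLp 2 (U *ᵥ (x i).ofLp)) (by positivity : 0 ≤ 1 / (n : ℝ))
    (fun i => hconv (y i)) (fun i => hdiff (y i) _)
    (fun i => (differentiable_residualOutput (x i) (f (x i))).differentiableAt)
    (fun i => hasLineDerivAt_residualOutput_sub (x i) (f (x i)) hWM)
  rw [sum_sub_distrib, mul_sub] at key
  -- `netObjVec` and `linObjVec` unfold definitionally to the two sums in `key`
  exact key

end
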